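/- Let p > 0 and suppose there exist constants k, K > 0 and exponents q ≥ r ≥ 0 such that k|y|^r ≤ |s(y)| ≤ K|y|^q for all |y| ≥ 1, and suppose p < r. If ∫_ℝ |y|^{p+q-r} ν(dy) < ∞, then ∫_0^∞ z^{p-1}(ν₊(z)+ν₋(z)) dz < ∞; and if ∫_0^∞ z^{p-1}(ν₊(z)+ν₋(z)) dz < ∞, then ∫_ℝ |y|^p ν(dy) < ∞. -/

import Mathlib

open MeasureTheory Set Filter
open scoped ENNReal NNReal Classical

/-- The function `c_Y` of the paper: `c_Y y = ∫_{[0,∞)} min(s(y),s(w)) ν(dw)` for `y ≥ 0`,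
`c_Y y = ∫_{(-∞,0)} min(|s(y)|,|s(w)|) ν(dw)` for `y < 0`. -/
noncomputable def cY (s : ℝ → ℝ) (ν : Measure ℝ) (y : ℝ) : ℝ :=
  if 0 ≤ y then ∫ w in Ici (0 : ℝ), min (s y) (s w) ∂ν
  else ∫ w in Iio (0 : ℝ), min |s y| |s w| ∂ν

/-- The slope `(c_Y(z) - c_Y(-y))/(s(z) - s(-y))` in the definition of `ζ₊, ρ₊`. -/
noncomputable def slopeYPlus (s : ℝ → ℝ) (ν : Measure ℝ) (z y : ℝ) : ℝ :=
  (cY s ν z - cY s ν (-y)) / (s z - s (-y))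

/-- The slope `(c_Y(y) - c_Y(-z))/(s(y) - s(-z))` in the definition of `ζ₋, ρ₋`. -/
noncomputable def slopeYMinus (s : ℝ → ℝ) (ν : Measure ℝ) (z y : ℝ) : ℝ :=
  (cY s ν y - cY s ν (-z)) / (s y - s (-z))

/-- The set of `y > 0` attaining the infimum in the definition of `ρ₊(z)`. -/
def argYPlus (s : ℝ → ℝ) (ν : Measure ℝ) (z : ℝ) : Set ℝ :=
  {y | 0 < y ∧ ∀ x, 0 < x → slopeYPlus s ν z y ≤ slopeYPlus s ν z x}

/-- The set of `y > 0` attaining the supremum in the definition of `ρ₋(z)`. -/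
def argYMinus (s : ℝ → ℝ) (ν : Measure ℝ) (z : ℝ) : Set ℝ :=
  {y | 0 < y ∧ ∀ x, 0 < x → slopeYMinus s ν z x ≤ slopeYMinus s ν z y}

/-- `ζ₊(z) = -inf_{y>0} (c_Y(z)-c_Y(-y))/(s(z)-s(-y))` if attained, `0` otherwise. -/
noncomputable def zetaPlus (s : ℝ → ℝ) (ν : Measure ℝ) (z : ℝ) : ℝ :=
  if (argYPlus s ν z).Nonempty then -sInf (slopeYPlus s ν z '' Ioi 0) else 0

/-- `ζ₋(z) = sup_{y>0} (c_Y(y)-c_Y(-z))/(s(y)-s(-z))` if attained, `0` otherwise. -/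
noncomputable def zetaMinus (s : ℝ → ℝ) (ν : Measure ℝ) (z : ℝ) : ℝ :=
  if (argYMinus s ν z).Nonempty then sSup (slopeYMinus s ν z '' Ioi 0) else 0

/-- `ν₊(z) = ζ₊(z) + ν([z,∞))`, the tail distribution function of the supremum of the
stopped process for the optimal embedding. -/
noncomputable def nuPlus (s : ℝ → ℝ) (ν : Measure ℝ) (z : ℝ) : ℝ :=
  zetaPlus s ν z + (ν (Ici z)).toReal

/-- `ν₋(z) = ν((-∞,-z]) + ζ₋(z)`, the tail distribution function of minus the infimum of
the stopped process for the optimal embedding. -/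
noncomputable def nuMinus (s : ℝ → ℝ) (ν : Measure ℝ) (z : ℝ) : ℝ :=
  (ν (Iic (-z))).toReal + zetaMinus s ν z

/-!
For `z > 0` one has `ν₊(z) + ν₋(z) = ν{|y| ≥ z} + ζ₊(z) + ζ₋(z)`. Both `ζ₊` and `ζ₋` are
nonnegative because `s` is unbounded on both sides, and since `min(t, g) / (b + t) ≤ min(1, g / b)`
they are at most `∫ min(1, |s(w)| / (k z^r)) ν(dw)` for `z ≥ 1`. By Tonelli and
`∫_0^∞ z^(p-1) min(1, a z^(-r)) dz ≤ (1/p + 1/(r-p)) a^(p/r)`, the `ζ`-part of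
`∫ z^(p-1) (ν₊ + ν₋) dz` is then bounded by a multiple of `∫ (|s|/k)^(p/r) dν`, which is finite
under the upper growth bound because `q p / r ≤ p + q - r`. By the layer-cake formula the
remaining part is `(∫ |y|^p dν) / p`, which is finite by the moment assumption and conversely is
dominated by the whole integral.
-/

section MinIntegral

variable {α : Type*} [MeasurableSpace α] {ν : Measure α} [IsFiniteMeasure ν] {g : α → ℝ}

lemma integrable_min_of_nonneg (hg : Measurable g) (hg0 : ∀ w, 0 ≤ g w) (t : ℝ) :
    Integrable (fun w => min t (g w)) ν :=
  .of_bound (measurable_const.min hg).aestronglyMeasurable |t| <| .of_forall fun w =>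
    abs_le.2 ⟨le_min (neg_abs_le t) ((neg_nonpos.2 (abs_nonneg t)).trans (hg0 w)),
      (min_le_left _ _).trans (le_abs_self t)⟩

lemma integrable_min_one_div (hg : Measurable g) (hg0 : ∀ w, 0 ≤ g w) {b : ℝ} (hb : 0 ≤ b) :
    Integrable (fun w => min 1 (g w / b)) ν :=
  integrable_min_of_nonneg (hg.div_const b) (fun w => div_nonneg (hg0 w) hb) 1

lemma integral_min_one_le_one [IsProbabilityMeasure ν] (hg : Measurable g)
    (hg0 : ∀ w, 0 ≤ g w) : ∫ w, min 1 (g w) ∂ν ≤ 1 := by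
  calc ∫ w, min 1 (g w) ∂ν ≤ ∫ _, (1 : ℝ) ∂ν :=
        integral_mono (integrable_min_of_nonneg hg hg0 1) (integrable_const 1)
          fun w => min_le_left _ _
    _ = 1 := by simp

lemma setIntegral_min_sub_div_le {S : Set α} (hg : Measurable g)
    (hg0 : ∀ w, 0 ≤ g w) {b b' t c : ℝ} (hb : 0 < b) (hbb' : b ≤ b') (ht : 0 ≤ t) (hc : 0 ≤ c) :
    ((∫ w in S, min t (g w) ∂ν) - c) / (b' + t) ≤ ∫ w, min 1 (g w / b) ∂ν := by
  have hb't : 0 < b' + t := by linarith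
  have hpt : ∀ w, min t (g w) / (b' + t) ≤ min 1 (g w / b) := fun w => le_min
    ((div_le_one hb't).2 ((min_le_left _ _).trans (by linarith)))
    (div_le_div₀ (hg0 w) (min_le_right _ _) hb (by linarith))
  calc ((∫ w in S, min t (g w) ∂ν) - c) / (b' + t)
      ≤ (∫ w in S, min t (g w) ∂ν) / (b' + t) := by gcongr; linarith
    _ = ∫ w in S, min t (g w) / (b' + t) ∂ν := (integral_div _ _).symm
    _ ≤ ∫ w in S, min 1 (g w / b) ∂ν :=
        integral_mono ((integrable_min_of_nonneg hg hg0 t).integrableOn.div_const _)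
          (integrable_min_one_div hg hg0 hb.le).integrableOn hpt
    _ ≤ ∫ w, min 1 (g w / b) ∂ν :=
        setIntegral_le_integral (integrable_min_one_div hg hg0 hb.le)
          (.of_forall fun w => le_min zero_le_one (div_nonneg (hg0 w) hb.le))

lemma lintegral_ofReal_lt_top_of_le_add_mul {f h : α → ℝ} {A B : ℝ}
    (hh : ∫⁻ w, ENNReal.ofReal (h w) ∂ν < ⊤) (hB : 0 ≤ B) (hfh : ∀ w, f w ≤ A + B * h w) :
    ∫⁻ w, ENNReal.ofReal (f w) ∂ν < ⊤ := by
  calc ∫⁻ w, ENNReal.ofReal (f w) ∂ν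
      ≤ ∫⁻ w, (ENNReal.ofReal A + ENNReal.ofReal B * ENNReal.ofReal (h w)) ∂ν :=
        lintegral_mono fun w => (ENNReal.ofReal_le_ofReal (hfh w)).trans <|
          ENNReal.ofReal_add_le.trans_eq (by rw [ENNReal.ofReal_mul hB])
    _ = ENNReal.ofReal A * ν univ + ENNReal.ofReal B * ∫⁻ w, ENNReal.ofReal (h w) ∂ν := by
        rw [lintegral_add_left measurable_const, lintegral_const,
          lintegral_const_mul' _ _ ENNReal.ofReal_ne_top]
    _ < ⊤ := ENNReal.add_lt_top.2 ⟨ENNReal.mul_lt_top ENNReal.ofReal_lt_top (measure_lt_top _ _),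
        ENNReal.mul_lt_top ENNReal.ofReal_lt_top hh⟩

end MinIntegral

section Zeta

variable {s : ℝ → ℝ} {ν : Measure ℝ} {z : ℝ}

lemma cY_of_nonneg (hmono : Monotone s) (hs0 : s 0 = 0) {y : ℝ} (hy : 0 ≤ y) :
    cY s ν y = ∫ w in Ici 0, min |s y| |s w| ∂ν := by
  rw [cY, if_pos hy]
  refine setIntegral_congr_fun measurableSet_Ici fun w (hw : 0 ≤ w) => ?_
  rw [abs_of_nonneg (hs0 ▸ hmono hy), abs_of_nonneg (hs0 ▸ hmono hw)]

lemma cY_of_neg {y : ℝ} (hy : y < 0) : cY s ν y = ∫ w in Iio 0, min |s y| |s w| ∂ν := by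
  rw [cY, if_neg hy.not_ge]

lemma cY_nonneg (hmono : Monotone s) (hs0 : s 0 = 0) (y : ℝ) : 0 ≤ cY s ν y := by
  rcases le_or_gt 0 y with hy | hy
  · rw [cY_of_nonneg hmono hs0 hy]
    exact setIntegral_nonneg measurableSet_Ici fun _ _ => le_min (abs_nonneg _) (abs_nonneg _)
  · rw [cY_of_neg hy]
    exact setIntegral_nonneg measurableSet_Iio fun _ _ => le_min (abs_nonneg _) (abs_nonneg _)

lemma isLeast_slopeYPlus {y₀ : ℝ} (hy₀ : y₀ ∈ argYPlus s ν z) :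
    IsLeast (slopeYPlus s ν z '' Ioi 0) (slopeYPlus s ν z y₀) :=
  ⟨⟨y₀, hy₀.1, rfl⟩, by rintro _ ⟨x, hx, rfl⟩; exact hy₀.2 x hx⟩

lemma isGreatest_slopeYMinus {y₀ : ℝ} (hy₀ : y₀ ∈ argYMinus s ν z) :
    IsGreatest (slopeYMinus s ν z '' Ioi 0) (slopeYMinus s ν z y₀) :=
  ⟨⟨y₀, hy₀.1, rfl⟩, by rintro _ ⟨x, hx, rfl⟩; exact hy₀.2 x hx⟩

lemma zetaPlus_nonneg (hmono : Monotone s) (hs0 : s 0 = 0)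
    (hbot : Tendsto (fun x => s (-x)) atTop atBot) : 0 ≤ zetaPlus s ν z := by
  rw [zetaPlus]
  split_ifs with h
  · obtain ⟨y₀, hy₀⟩ := h
    rw [(isLeast_slopeYPlus hy₀).csInf_eq, neg_nonneg]
    have hden : Tendsto (fun x => s z - s (-x)) atTop atTop :=
      tendsto_atTop_add_const_left _ _ (tendsto_neg_atBot_atTop.comp hbot)
    refine ge_of_tendsto ((tendsto_const_nhds (x := cY s ν z)).div_atTop hden) ?_
    filter_upwards [eventually_gt_atTop 0, hden.eventually_gt_atTop 0] with x hx hx'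
    calc slopeYPlus s ν z y₀ ≤ slopeYPlus s ν z x := hy₀.2 x hx
      _ ≤ cY s ν z / (s z - s (-x)) := by
          rw [slopeYPlus]
          gcongr
          exact sub_le_self _ (cY_nonneg hmono hs0 _)
  · exact le_rfl

lemma zetaMinus_nonneg (hmono : Monotone s) (hs0 : s 0 = 0) (htop : Tendsto s atTop atTop) :
    0 ≤ zetaMinus s ν z := by
  rw [zetaMinus]
  split_ifs with h
  · obtain ⟨y₀, hy₀⟩ := h
    rw [(isGreatest_slopeYMinus hy₀).csSup_eq]
    have hden : Tendsto (fun x => s x - s (-z)) atTop atTop :=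
      tendsto_atTop_add_const_right _ _ htop
    refine le_of_tendsto ((tendsto_const_nhds (x := -cY s ν (-z))).div_atTop hden) ?_
    filter_upwards [eventually_gt_atTop 0, hden.eventually_gt_atTop 0] with x hx hx'
    calc -cY s ν (-z) / (s x - s (-z)) ≤ slopeYMinus s ν z x := by
          rw [slopeYMinus]
          gcongr
          linarith [cY_nonneg (ν := ν) hmono hs0 x]
      _ ≤ slopeYMinus s ν z y₀ := hy₀.2 x hx
  · exact le_rfl

variable [IsFiniteMeasure ν]

lemma zetaPlus_le (hmono : Monotone s) (hs0 : s 0 = 0) (hz : 0 ≤ z) {b : ℝ} (hb : 0 < b)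
    (hbz : b ≤ |s z|) : zetaPlus s ν z ≤ ∫ w, min 1 (|s w| / b) ∂ν := by
  rw [zetaPlus]
  split_ifs with h
  · obtain ⟨y₀, hy₀⟩ := h
    have hy₀' : -y₀ < 0 := neg_lt_zero.2 hy₀.1
    have hslope : -slopeYPlus s ν z y₀ = (cY s ν (-y₀) - cY s ν z) / (|s z| + |s (-y₀)|) := by
      have hsz : 0 ≤ s z := hs0 ▸ hmono hz
      have hsy : s (-y₀) ≤ 0 := hs0 ▸ hmono hy₀'.le
      rw [slopeYPlus, abs_of_nonneg hsz, abs_of_nonpos hsy]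
      ring
    rw [(isLeast_slopeYPlus hy₀).csInf_eq, hslope, cY_of_neg hy₀']
    exact setIntegral_min_sub_div_le hmono.measurable.abs (fun _ => abs_nonneg _) hb hbz
      (abs_nonneg _) (cY_nonneg hmono hs0 z)
  · exact integral_nonneg fun w => le_min zero_le_one (div_nonneg (abs_nonneg _) hb.le)

lemma zetaMinus_le (hmono : Monotone s) (hs0 : s 0 = 0) (hz : 0 ≤ z) {b : ℝ} (hb : 0 < b)
    (hbz : b ≤ |s (-z)|) : zetaMinus s ν z ≤ ∫ w, min 1 (|s w| / b) ∂ν := by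
  rw [zetaMinus]
  split_ifs with h
  · obtain ⟨y₀, hy₀⟩ := h
    have hslope : slopeYMinus s ν z y₀ = (cY s ν y₀ - cY s ν (-z)) / (|s (-z)| + |s y₀|) := by
      have hsy : 0 ≤ s y₀ := hs0 ▸ hmono hy₀.1.le
      have hsz : s (-z) ≤ 0 := hs0 ▸ hmono (neg_nonpos.2 hz)
      rw [slopeYMinus, abs_of_nonneg hsy, abs_of_nonpos hsz]
      ring
    rw [(isGreatest_slopeYMinus hy₀).csSup_eq, hslope, cY_of_nonneg hmono hs0 hy₀.1.le]
    exact setIntegral_min_sub_div_le hmono.measurable.abs (fun _ => abs_nonneg _) hb hbz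
      (abs_nonneg _) (cY_nonneg hmono hs0 (-z))
  · exact integral_nonneg fun w => le_min zero_le_one (div_nonneg (abs_nonneg _) hb.le)

lemma zetaPlus_add_zetaMinus_le (hmono : Monotone s) (hs0 : s 0 = 0) (hz : 0 ≤ z) {b : ℝ}
    (hb : 0 < b) (hbz : b ≤ |s z|) (hbnz : b ≤ |s (-z)|) :
    zetaPlus s ν z + zetaMinus s ν z ≤ 2 * ∫ w, min 1 (|s w| / b) ∂ν := by
  linarith [zetaPlus_le (ν := ν) hmono hs0 hz hb hbz, zetaMinus_le (ν := ν) hmono hs0 hz hb hbnz]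

lemma zetaPlus_add_zetaMinus_le_two [IsProbabilityMeasure ν] (hmono : StrictMono s)
    (hs0 : s 0 = 0) (hz : 0 < z) : zetaPlus s ν z + zetaMinus s ν z ≤ 2 := by
  have hb : 0 < min |s z| |s (-z)| := lt_min (abs_pos.2 (hs0 ▸ hmono hz).ne')
    (abs_pos.2 (hs0 ▸ hmono (neg_neg_of_pos hz)).ne)
  have hmeas : Measurable fun w => |s w| / min |s z| |s (-z)| :=
    hmono.monotone.measurable.abs.div_const _
  linarith [zetaPlus_add_zetaMinus_le (ν := ν) hmono.monotone hs0 hz.le hb (min_le_left _ _)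
    (min_le_right _ _), integral_min_one_le_one (ν := ν) hmeas fun w => by positivity]

lemma ofReal_mul_zetaPlus_add_zetaMinus_le (hmono : Monotone s) (hs0 : s 0 = 0) (hz : 0 ≤ z)
    {b : ℝ} (hb : 0 < b) (hbz : b ≤ |s z|) (hbnz : b ≤ |s (-z)|) {c : ℝ} (hc : 0 ≤ c) :
    ENNReal.ofReal (c * (zetaPlus s ν z + zetaMinus s ν z)) ≤
      2 * ∫⁻ w, ENNReal.ofReal (c * min 1 (|s w| / b)) ∂ν := by
  have hint := integrable_min_one_div (ν := ν) hmono.measurable.abs (fun _ => abs_nonneg _) hb.le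
  calc ENNReal.ofReal (c * (zetaPlus s ν z + zetaMinus s ν z))
      ≤ ENNReal.ofReal (c * (2 * ∫ w, min 1 (|s w| / b) ∂ν)) := by
        gcongr
        exact zetaPlus_add_zetaMinus_le hmono hs0 hz hb hbz hbnz
    _ = 2 * ∫⁻ w, ENNReal.ofReal (c * min 1 (|s w| / b)) ∂ν := by
        rw [mul_left_comm, ENNReal.ofReal_mul zero_le_two, ← integral_const_mul,
          ofReal_integral_eq_lintegral_ofReal (hint.const_mul c)
            (.of_forall fun w => by positivity), ENNReal.ofReal_ofNat]

end Zeta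

lemma Real.rpow_le_one_add_rpow {x p m : ℝ} (hx : 0 ≤ x) (hp : 0 ≤ p) (hpm : p ≤ m) :
    x ^ p ≤ 1 + x ^ m := by
  rcases le_total x 1 with hx1 | hx1
  · linarith [Real.rpow_le_one hx hx1 hp, Real.rpow_nonneg hx m]
  · linarith [Real.rpow_le_rpow_of_exponent_le hx1 hpm]

lemma lintegral_abs_rpow_lt_top_of_le {ν : Measure ℝ} [IsFiniteMeasure ν] {p m : ℝ} (hp : 0 ≤ p)
    (hpm : p ≤ m) (h : ∫⁻ y, ENNReal.ofReal (|y| ^ m) ∂ν < ⊤) :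
    ∫⁻ y, ENNReal.ofReal (|y| ^ p) ∂ν < ⊤ :=
  lintegral_ofReal_lt_top_of_le_add_mul h zero_le_one fun y => by
    simpa using Real.rpow_le_one_add_rpow (abs_nonneg y) hp hpm

lemma setLIntegral_measure_abs_ge_mul_rpow_lt_top {ν : Measure ℝ} {p : ℝ} (hp : 0 < p)
    (h : ∫⁻ y, ENNReal.ofReal (|y| ^ p) ∂ν < ⊤) :
    ∫⁻ z in Ioi 0, ν {y | z ≤ |y|} * ENNReal.ofReal (z ^ (p - 1)) < ⊤ := by
  rw [lintegral_rpow_eq_lintegral_meas_le_mul ν (.of_forall abs_nonneg)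
    measurable_abs.aemeasurable hp] at h
  exact ENNReal.lt_top_of_mul_ne_top_right h.ne (ENNReal.ofReal_pos.2 hp).ne'

section Tails

variable {s : ℝ → ℝ} {ν : Measure ℝ} [IsFiniteMeasure ν] {z : ℝ}

lemma nuPlus_add_nuMinus (hz : 0 < z) : nuPlus s ν z + nuMinus s ν z =
    ν.real {y | z ≤ |y|} + (zetaPlus s ν z + zetaMinus s ν z) := by
  have hset : {y | z ≤ |y|} = Ici z ∪ Iic (-z) := by
    ext y
    simp only [mem_ofPred_eq, mem_union, mem_Ici, mem_Iic, le_abs, le_neg]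
  have hdisj : Disjoint (Ici z) (Iic (-z)) :=
    Set.disjoint_left.2 fun y (hy : z ≤ y) (hy' : y ≤ -z) => by linarith
  rw [nuPlus, nuMinus, hset, measureReal_union hdisj measurableSet_Iic, measureReal_def,
    measureReal_def]
  ring

lemma measure_mul_le_ofReal_mul_nuPlus_add_nuMinus (hmono : Monotone s) (hs0 : s 0 = 0)
    (htop : Tendsto s atTop atTop) (hbot : Tendsto (fun x => s (-x)) atTop atBot) (hz : 0 < z)
    {c : ℝ} (hc : 0 ≤ c) :
    ν {y | z ≤ |y|} * ENNReal.ofReal c ≤ ENNReal.ofReal (c * (nuPlus s ν z + nuMinus s ν z)) := by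
  rw [nuPlus_add_nuMinus hz, ENNReal.ofReal_mul hc, mul_comm, ← ofReal_measureReal]
  gcongr
  exact le_add_of_nonneg_right
    (add_nonneg (zetaPlus_nonneg hmono hs0 hbot) (zetaMinus_nonneg hmono hs0 htop))

lemma ofReal_mul_nuPlus_add_nuMinus_le (hz : 0 < z) {c : ℝ} (hc : 0 ≤ c) :
    ENNReal.ofReal (c * (nuPlus s ν z + nuMinus s ν z)) ≤
      ν {y | z ≤ |y|} * ENNReal.ofReal c +
        ENNReal.ofReal (c * (zetaPlus s ν z + zetaMinus s ν z)) := by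
  rw [nuPlus_add_nuMinus hz, mul_add]
  refine ENNReal.ofReal_add_le.trans_eq ?_
  rw [ENNReal.ofReal_mul hc, ofReal_measureReal, mul_comm]

variable {p : ℝ}

lemma setLIntegral_rpow_mul_nuPlus_add_nuMinus_lt_top (hp : 0 < p)
    (hmom : ∫⁻ y, ENNReal.ofReal (|y| ^ p) ∂ν < ⊤)
    (hzeta : ∫⁻ z in Ioi 0, ENNReal.ofReal (z ^ (p - 1) * (zetaPlus s ν z + zetaMinus s ν z)) < ⊤) :
    ∫⁻ z in Ioi 0, ENNReal.ofReal (z ^ (p - 1) * (nuPlus s ν z + nuMinus s ν z)) < ⊤ := by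
  have hmeas : Measurable fun z => ν {y | z ≤ |y|} * ENNReal.ofReal (z ^ (p - 1)) :=
    (Antitone.measurable fun a b hab => measure_mono fun y (hy : b ≤ |y|) => hab.trans hy).mul
      (by fun_prop)
  calc _ ≤ ∫⁻ z in Ioi 0, (ν {y | z ≤ |y|} * ENNReal.ofReal (z ^ (p - 1)) +
        ENNReal.ofReal (z ^ (p - 1) * (zetaPlus s ν z + zetaMinus s ν z))) :=
        setLIntegral_mono' measurableSet_Ioi fun z hz =>
          ofReal_mul_nuPlus_add_nuMinus_le hz (Real.rpow_nonneg (le_of_lt hz) _)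
    _ = _ := lintegral_add_left hmeas _
    _ < ⊤ := ENNReal.add_lt_top.2 ⟨setLIntegral_measure_abs_ge_mul_rpow_lt_top hp hmom, hzeta⟩

lemma lintegral_abs_rpow_lt_top_of_setLIntegral_nu_lt_top (hmono : Monotone s) (hs0 : s 0 = 0)
    (htop : Tendsto s atTop atTop) (hbot : Tendsto (fun x => s (-x)) atTop atBot) (hp : 0 < p)
    (h : ∫⁻ z in Ioi 0, ENNReal.ofReal (z ^ (p - 1) * (nuPlus s ν z + nuMinus s ν z)) < ⊤) :
    ∫⁻ y, ENNReal.ofReal (|y| ^ p) ∂ν < ⊤ := by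
  rw [lintegral_rpow_eq_lintegral_meas_le_mul ν (.of_forall abs_nonneg)
    measurable_abs.aemeasurable hp]
  refine ENNReal.mul_lt_top ENNReal.ofReal_lt_top (lt_of_le_of_lt ?_ h)
  exact setLIntegral_mono' measurableSet_Ioi fun z hz =>
    measure_mul_le_ofReal_mul_nuPlus_add_nuMinus hmono hs0 htop hbot hz
      (Real.rpow_nonneg (le_of_lt hz) _)

end Tails

section RpowIntegral

open Real

lemma lintegral_Ioc_rpow {p T : ℝ} (hp : 0 < p) (hT : 0 ≤ T) :
    ∫⁻ z in Ioc 0 T, ENNReal.ofReal (z ^ (p - 1)) = ENNReal.ofReal (T ^ p / p) := by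
  have hint : IntegrableOn (fun z : ℝ => z ^ (p - 1)) (Ioc 0 T) :=
    (intervalIntegrable_iff_integrableOn_Ioc_of_le hT).1
      (intervalIntegral.intervalIntegrable_rpow' (by linarith))
  rw [← ofReal_integral_eq_lintegral_ofReal hint
    ((ae_restrict_mem measurableSet_Ioc).mono fun z hz => rpow_nonneg hz.1.le _),
    ← intervalIntegral.integral_of_le hT, integral_rpow (.inl (by linarith)), sub_add_cancel,
    zero_rpow hp.ne', sub_zero]

lemma lintegral_Ioi_rpow {a T : ℝ} (ha : a < -1) (hT : 0 < T) :
    ∫⁻ z in Ioi T, ENNReal.ofReal (z ^ a) = ENNReal.ofReal (-T ^ (a + 1) / (a + 1)) := by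
  rw [← ofReal_integral_eq_lintegral_ofReal (integrableOn_Ioi_rpow_of_lt ha hT)
    ((ae_restrict_mem measurableSet_Ioi).mono fun z hz => rpow_nonneg (hT.trans hz).le _),
    integral_Ioi_rpow_of_lt ha hT]

lemma lintegral_rpow_mul_min_one_div_rpow_le {p r a : ℝ} (hp : 0 < p) (hpr : p < r)
    (ha : 0 ≤ a) : ∫⁻ z in Ioi 0, ENNReal.ofReal (z ^ (p - 1) * min 1 (a / z ^ r)) ≤
      ENNReal.ofReal ((1 / p + 1 / (r - p)) * a ^ (p / r)) := by
  rcases ha.eq_or_lt with rfl | ha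
  · simp
  have hr : 0 < r := hp.trans hpr
  -- split at the point `T` where `a / z ^ r = 1`
  set T := a ^ (1 / r) with hT
  have hT0 : 0 < T := rpow_pos_of_pos ha _
  have hTp : T ^ p = a ^ (p / r) := by rw [hT, ← rpow_mul ha.le, one_div_mul_eq_div]
  have hTpr : a * T ^ (p - r) = a ^ (p / r) := by
    have he : 1 + 1 / r * (p - r) = p / r := by field_simp; ring
    rw [hT, ← rpow_mul ha.le, ← rpow_one_add' ha.le (by rw [he]; positivity), he]
  rw [← Ioc_union_Ioi_eq_Ioi hT0.le, lintegral_union measurableSet_Ioi Ioc_disjoint_Ioi_same]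
  calc _ ≤ (∫⁻ z in Ioc 0 T, ENNReal.ofReal (z ^ (p - 1))) +
        ∫⁻ z in Ioi T, ENNReal.ofReal a * ENNReal.ofReal (z ^ (p - 1 - r)) := by
        refine add_le_add (setLIntegral_mono' measurableSet_Ioc fun z hz => ?_)
          (setLIntegral_mono' measurableSet_Ioi fun z hz => ?_)
        · exact ENNReal.ofReal_le_ofReal
            (mul_le_of_le_one_right (rpow_nonneg hz.1.le _) (min_le_left _ _))
        · have hz0 : 0 < z := hT0.trans hz
          rw [← ENNReal.ofReal_mul ha.le, rpow_sub hz0 (p - 1), mul_div_left_comm]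
          exact ENNReal.ofReal_le_ofReal
            (mul_le_mul_of_nonneg_left (min_le_right _ _) (rpow_nonneg hz0.le _))
    _ = ENNReal.ofReal (T ^ p / p) + ENNReal.ofReal (a * T ^ (p - r) / (r - p)) := by
        rw [lintegral_const_mul' _ _ ENNReal.ofReal_ne_top, lintegral_Ioc_rpow hp hT0.le,
          lintegral_Ioi_rpow (by linarith) hT0, ← ENNReal.ofReal_mul ha.le]
        congr 2
        rw [show p - 1 - r + 1 = p - r by ring, neg_div, ← div_neg, neg_sub, mul_div_assoc]
    _ = _ := by
        rw [← ENNReal.ofReal_add (by positivity) (div_nonneg (by positivity) (by linarith)),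
          hTp, hTpr]
        ring_nf

end RpowIntegral

section Growth

open Real

variable {s : ℝ → ℝ}

lemma tendsto_atTop_of_mul_rpow_le {f : ℝ → ℝ} {k r : ℝ} (hk : 0 < k) (hr : 0 < r)
    (h : ∀ x, 1 ≤ x → k * x ^ r ≤ f x) : Tendsto f atTop atTop :=
  tendsto_atTop_mono' _ ((eventually_ge_atTop 1).mono h)
    ((tendsto_rpow_atTop hr).const_mul_atTop hk)

lemma tendsto_atTop_of_mul_rpow_le_abs (hmono : StrictMono s) (hs0 : s 0 = 0) {k r : ℝ}
    (hk : 0 < k) (hr : 0 < r) (hlow : ∀ x, 1 ≤ x → k * x ^ r ≤ |s x|) :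
    Tendsto s atTop atTop :=
  tendsto_atTop_of_mul_rpow_le hk hr fun x hx =>
    (hlow x hx).trans_eq (abs_of_pos (hs0 ▸ hmono (zero_lt_one.trans_le hx)))

lemma tendsto_neg_atBot_of_mul_rpow_le_abs (hmono : StrictMono s) (hs0 : s 0 = 0) {k r : ℝ}
    (hk : 0 < k) (hr : 0 < r) (hlow : ∀ x, 1 ≤ x → k * x ^ r ≤ |s (-x)|) :
    Tendsto (fun x => s (-x)) atTop atBot :=
  tendsto_neg_atTop_iff.1 <| tendsto_atTop_of_mul_rpow_le hk hr fun x hx =>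
    (hlow x hx).trans_eq (abs_of_neg (hs0 ▸ hmono (neg_lt_zero.2 (zero_lt_one.trans_le hx))))

lemma mul_rpow_le_abs_apply {k r x : ℝ} (hlow : ∀ y, 1 ≤ |y| → k * |y| ^ r ≤ |s y|)
    (hx : 1 ≤ x) : k * x ^ r ≤ |s x| ∧ k * x ^ r ≤ |s (-x)| := by
  have hx' : |x| = x := abs_of_pos (zero_lt_one.trans_le hx)
  have hright := hlow x (by rwa [hx'])
  have hleft := hlow (-x) (by rwa [abs_neg, hx'])
  rw [hx'] at hright
  rw [abs_neg, hx'] at hleft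
  exact ⟨hright, hleft⟩

lemma abs_div_rpow_le (hmono : Monotone s) {k K q e m : ℝ} (hk : 0 < k) (hK : 0 ≤ K)
    (he : 0 ≤ e) (hqm : q * e ≤ m) (hb : ∀ y, 1 ≤ |y| → |s y| ≤ K * |y| ^ q) (w : ℝ) :
    (|s w| / k) ^ e ≤ (max |s (-1)| |s 1| / k) ^ e + (K / k) ^ e * |w| ^ m := by
  rcases le_total |w| 1 with hw | hw
  · have hsw : |s w| ≤ max |s (-1)| |s 1| :=
      abs_le_max_abs_abs (hmono (abs_le.1 hw).1) (hmono (abs_le.1 hw).2)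
    have := rpow_le_rpow (by positivity) (div_le_div_of_nonneg_right hsw hk.le) he
    nlinarith [rpow_nonneg (div_nonneg hK hk.le) e, rpow_nonneg (abs_nonneg w) m]
  · calc (|s w| / k) ^ e ≤ (K / k * |w| ^ q) ^ e := by
          gcongr
          rw [div_mul_eq_mul_div]
          gcongr
          exact hb w hw
      _ = (K / k) ^ e * |w| ^ (q * e) := by
          rw [mul_rpow (by positivity) (by positivity), rpow_mul (abs_nonneg w)]
      _ ≤ (K / k) ^ e * |w| ^ m := by gcongr
      _ ≤ _ := le_add_of_nonneg_left (by positivity)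

end Growth

open Real in
lemma setLIntegral_rpow_mul_zeta_lt_top {s : ℝ → ℝ} {ν : Measure ℝ} [IsProbabilityMeasure ν]
    (hmono : StrictMono s) (hs0 : s 0 = 0) {p r k : ℝ} (hp : 0 < p) (hpr : p < r) (hk : 0 < k)
    (hgrowth : ∀ z, 1 ≤ z → k * z ^ r ≤ |s z| ∧ k * z ^ r ≤ |s (-z)|)
    (hmom : ∫⁻ w, ENNReal.ofReal ((|s w| / k) ^ (p / r)) ∂ν < ⊤) :
    ∫⁻ z in Ioi 0, ENNReal.ofReal (z ^ (p - 1) * (zetaPlus s ν z + zetaMinus s ν z)) < ⊤ := by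
  have hsm : Measurable s := hmono.monotone.measurable
  rw [← Ioc_union_Ioi_eq_Ioi zero_le_one, lintegral_union measurableSet_Ioi Ioc_disjoint_Ioi_same,
    ENNReal.add_lt_top]
  constructor
  · have hint : IntegrableOn (fun z : ℝ => z ^ (p - 1) * 2) (Ioc 0 1) :=
      ((intervalIntegrable_iff_integrableOn_Ioc_of_le zero_le_one).1
        (intervalIntegral.intervalIntegrable_rpow' (by linarith))).mul_const 2
    refine lt_of_le_of_lt (setLIntegral_mono' measurableSet_Ioc fun z hz =>
      ENNReal.ofReal_le_ofReal ?_) hint.lintegral_lt_top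
    exact mul_le_mul_of_nonneg_left (zetaPlus_add_zetaMinus_le_two hmono hs0 hz.1)
      (rpow_nonneg hz.1.le _)
  set F : ℝ → ℝ → ℝ≥0∞ := fun z w => ENNReal.ofReal (z ^ (p - 1) * min 1 ((|s w| / k) / z ^ r))
  calc _ ≤ ∫⁻ z in Ioi 1, 2 * ∫⁻ w, F z w ∂ν := setLIntegral_mono' measurableSet_Ioi fun z hz => ?_
    _ = 2 * ∫⁻ w, (∫⁻ z in Ioi 1, F z w) ∂ν := by
        rw [lintegral_const_mul' _ _ (by simp), lintegral_lintegral_swap]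
        exact (Measurable.ennreal_ofReal (f := fun zw : ℝ × ℝ =>
          zw.1 ^ (p - 1) * min 1 ((|s zw.2| / k) / zw.1 ^ r)) (by fun_prop)).aemeasurable
    _ ≤ 2 * ∫⁻ w, ENNReal.ofReal ((1 / p + 1 / (r - p)) * (|s w| / k) ^ (p / r)) ∂ν := by
        gcongr with w
        exact (lintegral_mono_set (Ioi_subset_Ioi zero_le_one)).trans
          (lintegral_rpow_mul_min_one_div_rpow_le hp hpr (by positivity))
    _ < ⊤ := by
        simp_rw [ENNReal.ofReal_mul (by positivity : (0 : ℝ) ≤ 1 / p + 1 / (r - p))]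
        rw [lintegral_const_mul' _ _ ENNReal.ofReal_ne_top]
        exact ENNReal.mul_lt_top (by simp) (ENNReal.mul_lt_top ENNReal.ofReal_lt_top hmom)
  have hz0 : 0 < z := zero_lt_one.trans hz
  refine (ofReal_mul_zetaPlus_add_zetaMinus_le hmono.monotone hs0 hz0.le (by positivity)
    (hgrowth z hz.le).1 (hgrowth z hz.le).2 (rpow_nonneg hz0.le _)).trans_eq ?_
  simp only [F, div_div]

theorem Hp_embedding_polynomial_scale_p_lt_r_general
    (s : ℝ → ℝ) (hmono : StrictMono s) (hs0 : s 0 = 0)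
    (ν : Measure ℝ) [IsProbabilityMeasure ν]
    (p q r k K : ℝ) (hp : 0 < p) (hk : 0 < k) (hK : 0 < K)
    (hrq : r ≤ q) (hpr : p < r)
    (hbound : ∀ y : ℝ, 1 ≤ |y| → k * |y| ^ r ≤ |s y| ∧ |s y| ≤ K * |y| ^ q) :
    ((∫⁻ y, ENNReal.ofReal (|y| ^ (p + q - r)) ∂ν < ⊤) →
      ∫⁻ z in Ioi (0 : ℝ), ENNReal.ofReal
        (z ^ (p - 1) * (nuPlus s ν z + nuMinus s ν z)) < ⊤) ∧
    ((∫⁻ z in Ioi (0 : ℝ), ENNReal.ofReal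
        (z ^ (p - 1) * (nuPlus s ν z + nuMinus s ν z)) < ⊤) →
      ∫⁻ y, ENNReal.ofReal (|y| ^ p) ∂ν < ⊤) := by
  have hr : 0 < r := hp.trans hpr
  have hgrowth := fun z (hz : 1 ≤ z) => mul_rpow_le_abs_apply (fun y hy => (hbound y hy).1) hz
  refine ⟨fun hmom => ?_, fun hfin => ?_⟩
  · have hmom_s : ∫⁻ w, ENNReal.ofReal ((|s w| / k) ^ (p / r)) ∂ν < ⊤ :=
      lintegral_ofReal_lt_top_of_le_add_mul hmom (by positivity)
        (abs_div_rpow_le hmono.monotone hk hK.le (by positivity)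
          (by rw [mul_div_assoc', div_le_iff₀ hr]; nlinarith) fun y hy => (hbound y hy).2)
    exact setLIntegral_rpow_mul_nuPlus_add_nuMinus_lt_top hp
      (lintegral_abs_rpow_lt_top_of_le hp.le (by linarith) hmom)
      (setLIntegral_rpow_mul_zeta_lt_top hmono hs0 hp hpr hk hgrowth hmom_s)
  · exact lintegral_abs_rpow_lt_top_of_setLIntegral_nu_lt_top hmono.monotone hs0
      (tendsto_atTop_of_mul_rpow_le_abs hmono hs0 hk hr fun x hx => (hgrowth x hx).1)
      (tendsto_neg_atBot_of_mul_rpow_le_abs hmono hs0 hk hr fun x hx => (hgrowth x hx).2) hp hfin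

/-- Theorem 4(ii) of the paper: case `p < r` under the polynomial growth
bounds `k|y|^r ≤ |s(y)| ≤ K|y|^q` for `|y| ≥ 1`. -/
theorem Hp_embedding_polynomial_scale_p_lt_r
    (s : ℝ → ℝ) (hs : Continuous s) (hmono : StrictMono s) (hs0 : s 0 = 0)
    (ν : Measure ℝ) [IsProbabilityMeasure ν] (hν0 : ν {0} = 0)
    (p q r k K : ℝ) (hp : 0 < p) (hk : 0 < k) (hK : 0 < K)
    (hr : 0 ≤ r) (hrq : r ≤ q) (hpr : p < r)
    (hbound : ∀ y : ℝ, 1 ≤ |y| → k * |y| ^ r ≤ |s y| ∧ |s y| ≤ K * |y| ^ q) :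
    ((∫⁻ y, ENNReal.ofReal (|y| ^ (p + q - r)) ∂ν < ⊤) →
      ∫⁻ z in Ioi (0 : ℝ), ENNReal.ofReal
        (z ^ (p - 1) * (nuPlus s ν z + nuMinus s ν z)) < ⊤) ∧
    ((∫⁻ z in Ioi (0 : ℝ), ENNReal.ofReal
        (z ^ (p - 1) * (nuPlus s ν z + nuMinus s ν z)) < ⊤) →
      ∫⁻ y, ENNReal.ofReal (|y| ^ p) ∂ν < ⊤) :=
  Hp_embedding_polynomial_scale_p_lt_r_general s hmono hs0 ν p q r k K hp hk hK hrq hpr hbound
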